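/- arXiv:2208.04561 — 2 statements merged into one kernel-verified Lean document; each statement's English description precedes it below -/
import Mathlib

section
/- Let Ω ⊂ ℝᵈ be a bounded nonempty domain, ε > 0, and γ a nonnegative measurable kernel with ess inf_{x,y∈Ω, ‖x−y‖<ε} ∫_{ℝᵈ} min{γ(z,x), γ(z,y)} dz > 0. Then the nonlocal Poincaré inequality holds on V(Ω;γ). -/
open MeasureTheory ENNReal Filter

noncomputable section

abbrev Euc (d : ℕ) := EuclideanSpace ℝ (Fin d)

/-- The nonlocal energy ∫_Ω ∫_{ℝᵈ} (v(x)-v(y))² γ(y,x) dy dx (as an extended real). -/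
def energy {d : ℕ} (Ω : Set (Euc d)) (γ : Euc d → Euc d → ℝ) (v : Euc d → ℝ) : ℝ≥0∞ :=
  ∫⁻ x in Ω, ∫⁻ y, ENNReal.ofReal ((v x - v y) ^ 2 * γ y x)

/-- The squared seminorm ‖v‖²_{V(Ω;γ)} = ∫_Ω v² dx + energy. -/
def Vnorm {d : ℕ} (Ω : Set (Euc d)) (γ : Euc d → Euc d → ℝ) (v : Euc d → ℝ) : ℝ≥0∞ :=
  (∫⁻ x in Ω, ENNReal.ofReal ((v x) ^ 2)) + energy Ω γ v

/-- Membership in the function space V(Ω;γ). -/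
def memV {d : ℕ} (Ω : Set (Euc d)) (γ : Euc d → Euc d → ℝ) (v : Euc d → ℝ) : Prop :=
  Measurable v ∧ Vnorm Ω γ v < ⊤

/-- The nonlocal boundary Γ = {y ∉ Ω : ∫_Ω γ(y,x) dx > 0}. -/
def Gamma {d : ℕ} (Ω : Set (Euc d)) (γ : Euc d → Euc d → ℝ) : Set (Euc d) :=
  {y | y ∉ Ω ∧ 0 < ∫⁻ x in Ω, ENNReal.ofReal (γ y x)}

/-- The symmetric bilinear form B(u,v). -/
def Bform {d : ℕ} (Ω : Set (Euc d)) (γ : Euc d → Euc d → ℝ) (u v : Euc d → ℝ) : ℝ :=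
  (1/2) * (∫ x in Ω, ∫ y in Ω, (u x - u y) * (v x - v y) * γ y x) +
    ∫ x in Ω, ∫ y in Gamma Ω γ, (u x - u y) * (v x - v y) * γ y x

/-- The nonlocal Poincaré inequality holds on V(Ω;γ). -/
def PoincareHolds {d : ℕ} (Ω : Set (Euc d)) (γ : Euc d → Euc d → ℝ) : Prop :=
  ∃ C > (0 : ℝ), ∀ v : Euc d → ℝ, memV Ω γ v →
    (∫⁻ x in Ω, ∫⁻ y in Ω, ENNReal.ofReal ((v x - v y) ^ 2)) ≤
      ENNReal.ofReal C * ∫⁻ x in Ω, ∫⁻ y, ENNReal.ofReal ((v x - v y) ^ 2 * γ y x)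

/- ### Auxiliary lemmas for the proof of statement 12 -/

private lemma sq_sub_le_aux (a b c : ℝ) : (a - b)^2 ≤ 2*(a-c)^2 + 2*(c-b)^2 := by
  nlinarith [sq_nonneg (a + b - 2*c)]

private lemma iterated_eq_prod_aux {d : ℕ} {f : Euc d × Euc d → ℝ≥0∞} (hf : Measurable f)
    (A B : Set (Euc d)) :
    ∫⁻ x in A, ∫⁻ y in B, f (x, y) = ∫⁻ p in A ×ˢ B, f p := by
  have h : (volume : Measure (Euc d × Euc d)).restrict (A ×ˢ B)
      = (volume.restrict A).prod (volume.restrict B) := by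
    rw [Measure.volume_eq_prod, Measure.prod_restrict]
  rw [h, MeasureTheory.lintegral_prod f hf.aemeasurable]

private lemma Fmeas_aux {d : ℕ} {v : Euc d → ℝ} (hv : Measurable v) :
    Measurable (fun pr : Euc d × Euc d => ENNReal.ofReal ((v pr.1 - v pr.2)^2)) :=
  ENNReal.measurable_ofReal.comp
    (((hv.comp measurable_fst).sub (hv.comp measurable_snd)).pow_const 2)

private lemma Emeas_aux {d : ℕ} {v : Euc d → ℝ} (hv : Measurable v)
    {γ : Euc d → Euc d → ℝ} (hγm : Measurable (Function.uncurry γ)) :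
    Measurable (fun x : Euc d => ∫⁻ z, ENNReal.ofReal ((v x - v z)^2 * γ z x)) := by
  apply Measurable.lintegral_prod_right'
    (f := fun q : Euc d × Euc d => ENNReal.ofReal ((v q.1 - v q.2)^2 * γ q.2 q.1))
  exact ENNReal.measurable_ofReal.comp
    ((((hv.comp measurable_fst).sub (hv.comp measurable_snd)).pow_const 2).mul
      (hγm.comp (measurable_snd.prodMk measurable_fst)))

/-- Restriction of the measure to a subset of a union is dominated by the sum of restrictions. -/
private lemma restrict_le_sum_aux {d : ℕ} {Ω : Set (Euc d)} {T : Finset (Euc d)}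
    {A : Euc d → Set (Euc d)} (hAm : ∀ p, MeasurableSet (A p))
    (hcov : Ω ⊆ ⋃ p ∈ T, A p) :
    (volume.restrict Ω : Measure (Euc d)) ≤ ∑ p ∈ T, volume.restrict (A p) := by
  refine Measure.le_iff.mpr fun s hs => ?_
  rw [Measure.restrict_apply hs, Measure.finset_sum_apply]
  calc volume (s ∩ Ω) ≤ volume (⋃ p ∈ T, s ∩ A p) := by
        refine measure_mono fun z hz => ?_
        obtain ⟨hzs, hzΩ⟩ := hz
        obtain ⟨p, hpT, hzA⟩ := Set.mem_iUnion₂.mp (hcov hzΩ)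
        exact Set.mem_iUnion₂.mpr ⟨p, hpT, hzs, hzA⟩
    _ ≤ ∑ p ∈ T, volume (s ∩ A p) := measure_biUnion_finset_le _ _
    _ = ∑ p ∈ T, (volume.restrict (A p)) s := by
        exact Finset.sum_congr rfl fun p _ => (Measure.restrict_apply hs).symm

/-- Pointwise elementary inequality on `ℝ≥0∞`. -/
private lemma F_triangle_aux {d : ℕ} (v : Euc d → ℝ) (x y z : Euc d) :
    ENNReal.ofReal ((v x - v y)^2) ≤
      2 * ENNReal.ofReal ((v x - v z)^2) + 2 * ENNReal.ofReal ((v z - v y)^2) := by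
  calc ENNReal.ofReal ((v x - v y)^2)
      ≤ ENNReal.ofReal (2*(v x - v z)^2 + 2*(v z - v y)^2) :=
        ENNReal.ofReal_le_ofReal (sq_sub_le_aux _ _ _)
    _ = 2 * ENNReal.ofReal ((v x - v z)^2) + 2 * ENNReal.ofReal ((v z - v y)^2) := by
        rw [ENNReal.ofReal_add (by positivity) (by positivity),
          ENNReal.ofReal_mul (by norm_num), ENNReal.ofReal_mul (by norm_num)]
        norm_num

/-- if ess inf_{x,y∈Ω,‖x−y‖<ε} ∫ min{γ(z,x),γ(z,y)} dz > 0, the nonlocal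
Poincaré inequality holds on V(Ω;γ). -/
theorem statement12 {d : ℕ} (Ω : Set (Euc d)) (hΩo : IsOpen Ω) (hΩc : IsConnected Ω)
    (hΩb : Bornology.IsBounded Ω) (hΩne : Ω.Nonempty)
    (γ : Euc d → Euc d → ℝ) (hγm : Measurable (Function.uncurry γ)) (hγ0 : ∀ x y, 0 ≤ γ x y)
    (ε : ℝ) (hε : 0 < ε)
    (hinf : 0 < essInf
      (fun p : Euc d × Euc d => ∫⁻ z, ENNReal.ofReal (min (γ z p.1) (γ z p.2)))
      (volume.restrict ((Ω ×ˢ Ω) ∩ {p : Euc d × Euc d | dist p.1 p.2 < ε}))) :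
    PoincareHolds Ω γ := by
  classical
  obtain ⟨-, hΩpc⟩ := hΩc
  have hμΩ_fin : (volume : Measure (Euc d)) Ω ≠ ∞ :=
    ((measure_mono subset_closure).trans_lt hΩb.isCompact_closure.measure_lt_top).ne
  set m : Euc d × Euc d → ℝ≥0∞ :=
    fun p => ∫⁻ z, ENNReal.ofReal (min (γ z p.1) (γ z p.2)) with hm_def
  set S : Set (Euc d × Euc d) :=
    (Ω ×ˢ Ω) ∩ {p : Euc d × Euc d | dist p.1 p.2 < ε} with hS_def
  set c : ℝ≥0∞ := min (essInf m (volume.restrict S)) 1 with hc_def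
  have hc0 : c ≠ 0 := (lt_min hinf one_pos).ne'
  have hcT : c ≠ ∞ := ((min_le_right _ _).trans_lt (by norm_num)).ne
  have hmc : ∀ᵐ p ∂(volume.restrict S), c ≤ m p := by
    filter_upwards [ae_essInf_le (f := m) (μ := volume.restrict S)] with p hp
    exact le_trans (min_le_left _ _) hp
  set K₀ : ℝ≥0∞ := 4 * c⁻¹ * volume Ω with hK₀_def
  have hK₀T : K₀ ≠ ∞ :=
    ENNReal.mul_ne_top (ENNReal.mul_ne_top (by norm_num) (ENNReal.inv_ne_top.mpr hc0)) hμΩ_fin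
  -- ### Strip estimate
  have strip : ∀ (A1 B1 : Set (Euc d)), A1 ⊆ Ω → B1 ⊆ Ω →
      (∀ x ∈ A1, ∀ y ∈ B1, dist x y < ε) → ∀ v : Euc d → ℝ, Measurable v →
      (∫⁻ x in A1, ∫⁻ y in B1, ENNReal.ofReal ((v x - v y)^2)) ≤ K₀ * energy Ω γ v := by
    intro A1 B1 hA1s hB1s hdist v hv
    set E : Euc d → ℝ≥0∞ := fun x => ∫⁻ z, ENNReal.ofReal ((v x - v z)^2 * γ z x) with hE_def
    have hEmv : Measurable E := Emeas_aux hv hγm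
    have henergy : energy Ω γ v = ∫⁻ x in Ω, E x := rfl
    have hsub : A1 ×ˢ B1 ⊆ S := fun pr hpr => ⟨⟨hA1s hpr.1, hB1s hpr.2⟩, hdist _ hpr.1 _ hpr.2⟩
    have hae : ∀ᵐ pr ∂(volume.restrict (A1 ×ˢ B1)), c ≤ m pr :=
      (ae_mono (Measure.restrict_mono hsub le_rfl)) hmc
    have hptwise : ∀ pr : Euc d × Euc d, c ≤ m pr →
        ENNReal.ofReal ((v pr.1 - v pr.2)^2) ≤ c⁻¹ * (2 * E pr.1 + 2 * E pr.2) := by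
      rintro ⟨x, y⟩ hcm
      have hg1 : Measurable fun z => ENNReal.ofReal ((v x - v z)^2 * γ z x) :=
        ENNReal.measurable_ofReal.comp
          ((((measurable_const.sub hv)).pow_const 2).mul
            (hγm.comp (measurable_id.prodMk measurable_const)))
      have hg2 : Measurable fun z => ENNReal.ofReal ((v y - v z)^2 * γ z y) :=
        ENNReal.measurable_ofReal.comp
          ((((measurable_const.sub hv)).pow_const 2).mul
            (hγm.comp (measurable_id.prodMk measurable_const)))
      have hmain : ENNReal.ofReal ((v x - v y)^2) * m (x, y) ≤ 2 * E x + 2 * E y := by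
        have heq : ENNReal.ofReal ((v x - v y)^2) * m (x, y)
            = ∫⁻ z, ENNReal.ofReal ((v x - v y)^2) * ENNReal.ofReal (min (γ z x) (γ z y)) :=
          (lintegral_const_mul' _ _ ENNReal.ofReal_ne_top).symm
        rw [heq]
        have hle : ∀ z : Euc d,
            ENNReal.ofReal ((v x - v y)^2) * ENNReal.ofReal (min (γ z x) (γ z y)) ≤
            2 * ENNReal.ofReal ((v x - v z)^2 * γ z x)
              + 2 * ENNReal.ofReal ((v y - v z)^2 * γ z y) := by
          intro z
          rw [← ENNReal.ofReal_mul (sq_nonneg _)]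
          have h2 : (2:ℝ≥0∞) = ENNReal.ofReal 2 := by norm_num
          rw [h2, ← ENNReal.ofReal_mul (by norm_num), ← ENNReal.ofReal_mul (by norm_num),
            ← ENNReal.ofReal_add (mul_nonneg (by norm_num) (mul_nonneg (sq_nonneg _) (hγ0 z x)))
              (mul_nonneg (by norm_num) (mul_nonneg (sq_nonneg _) (hγ0 z y)))]
          apply ENNReal.ofReal_le_ofReal
          have hmin0 : 0 ≤ min (γ z x) (γ z y) := le_min (hγ0 z x) (hγ0 z y)
          have h1 := sq_sub_le_aux (v x) (v y) (v z)
          have step1 : (v x - v y)^2 * min (γ z x) (γ z y)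
              ≤ (2*(v x - v z)^2 + 2*(v z - v y)^2) * min (γ z x) (γ z y) :=
            mul_le_mul_of_nonneg_right h1 hmin0
          have step2 : (v x - v z)^2 * min (γ z x) (γ z y) ≤ (v x - v z)^2 * γ z x :=
            mul_le_mul_of_nonneg_left (min_le_left _ _) (sq_nonneg _)
          have step3 : (v z - v y)^2 * min (γ z x) (γ z y) ≤ (v z - v y)^2 * γ z y :=
            mul_le_mul_of_nonneg_left (min_le_right _ _) (sq_nonneg _)
          have hsq : (v z - v y)^2 = (v y - v z)^2 := by ring
          nlinarith [step1, step2, step3]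
        calc ∫⁻ z, ENNReal.ofReal ((v x - v y)^2) * ENNReal.ofReal (min (γ z x) (γ z y))
            ≤ ∫⁻ z, (2 * ENNReal.ofReal ((v x - v z)^2 * γ z x)
              + 2 * ENNReal.ofReal ((v y - v z)^2 * γ z y)) := lintegral_mono hle
          _ = 2 * E x + 2 * E y := by
              rw [lintegral_add_left (hg1.const_mul 2), lintegral_const_mul 2 hg1,
                lintegral_const_mul 2 hg2]
      calc ENNReal.ofReal ((v x - v y)^2)
          = c⁻¹ * (c * ENNReal.ofReal ((v x - v y)^2)) := by
            rw [← mul_assoc, ENNReal.inv_mul_cancel hc0 hcT, one_mul]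
        _ ≤ c⁻¹ * (2 * E x + 2 * E y) := by
            refine mul_le_mul_right ?_ _
            calc c * ENNReal.ofReal ((v x - v y)^2)
                ≤ m (x, y) * ENNReal.ofReal ((v x - v y)^2) := mul_le_mul_left hcm _
              _ = ENNReal.ofReal ((v x - v y)^2) * m (x, y) := mul_comm _ _
              _ ≤ 2 * E x + 2 * E y := hmain
    rw [iterated_eq_prod_aux (Fmeas_aux hv) A1 B1]
    have hE1 : Measurable fun pr : Euc d × Euc d => E pr.1 := hEmv.comp measurable_fst
    have hE2 : Measurable fun pr : Euc d × Euc d => E pr.2 := hEmv.comp measurable_snd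
    have hmeas1 : Measurable fun pr : Euc d × Euc d => c⁻¹ * (2 * E pr.1 + 2 * E pr.2) :=
      ((hE1.const_mul 2).add (hE2.const_mul 2)).const_mul _
    calc ∫⁻ pr in A1 ×ˢ B1, ENNReal.ofReal ((v pr.1 - v pr.2)^2)
        ≤ ∫⁻ pr in A1 ×ˢ B1, c⁻¹ * (2 * E pr.1 + 2 * E pr.2) :=
          lintegral_mono_ae (hae.mono fun pr hp => hptwise pr hp)
      _ = c⁻¹ * (2 * (∫⁻ pr in A1 ×ˢ B1, E pr.1) + 2 * (∫⁻ pr in A1 ×ˢ B1, E pr.2)) := by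
          rw [lintegral_const_mul (f := fun pr : Euc d × Euc d => 2 * E pr.1 + 2 * E pr.2) _
              ((hE1.const_mul 2).add (hE2.const_mul 2)),
            lintegral_add_left (hE1.const_mul 2),
            lintegral_const_mul 2 hE1,
            lintegral_const_mul 2 hE2]
      _ ≤ K₀ * energy Ω γ v := by
          have hI1 : ∫⁻ pr in A1 ×ˢ B1, E pr.1 ≤ energy Ω γ v * volume Ω := by
            rw [← iterated_eq_prod_aux (f := fun pr : Euc d × Euc d => E pr.1) hE1 A1 B1]
            calc ∫⁻ x in A1, ∫⁻ _ in B1, E x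
                = ∫⁻ x in A1, E x * volume B1 := by
                  refine lintegral_congr fun x => setLIntegral_const _ _
              _ = (∫⁻ x in A1, E x) * volume B1 :=
                  lintegral_mul_const' _ _ (((measure_mono hB1s).trans_lt
                    (lt_top_iff_ne_top.mpr hμΩ_fin)).ne)
              _ ≤ energy Ω γ v * volume Ω := by
                  rw [henergy]
                  exact mul_le_mul' (lintegral_mono' (Measure.restrict_mono hA1s le_rfl) le_rfl)
                    (measure_mono hB1s)
          have hI2 : ∫⁻ pr in A1 ×ˢ B1, E pr.2 ≤ energy Ω γ v * volume Ω := by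
            rw [← iterated_eq_prod_aux (f := fun pr : Euc d × Euc d => E pr.2) hE2 A1 B1]
            calc ∫⁻ _ in A1, ∫⁻ y in B1, E y
                = (∫⁻ y in B1, E y) * volume A1 := setLIntegral_const _ _
              _ ≤ energy Ω γ v * volume Ω := by
                  rw [henergy]
                  exact mul_le_mul' (lintegral_mono' (Measure.restrict_mono hB1s le_rfl) le_rfl)
                    (measure_mono hA1s)
          calc c⁻¹ * (2 * (∫⁻ pr in A1 ×ˢ B1, E pr.1) + 2 * (∫⁻ pr in A1 ×ˢ B1, E pr.2))
              ≤ c⁻¹ * (2 * (energy Ω γ v * volume Ω) + 2 * (energy Ω γ v * volume Ω)) := by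
                exact mul_le_mul_right (add_le_add (mul_le_mul_right hI1 2)
                  (mul_le_mul_right hI2 2)) _
            _ = K₀ * energy Ω γ v := by rw [hK₀_def]; ring
  -- ### Jensen / chaining step
  have jensen : ∀ (A1 B1 C1 : Set (Euc d)), volume C1 ≠ 0 → volume C1 ≠ ∞ →
      ∀ v : Euc d → ℝ, Measurable v →
      (∫⁻ x in A1, ∫⁻ y in B1, ENNReal.ofReal ((v x - v y)^2)) ≤
        (volume C1)⁻¹ * (2 * volume B1 * (∫⁻ x in A1, ∫⁻ z in C1, ENNReal.ofReal ((v x - v z)^2))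
          + 2 * volume A1 * (∫⁻ z in C1, ∫⁻ y in B1, ENNReal.ofReal ((v z - v y)^2))) := by
    intro A1 B1 C1 hC0 hCT v hv
    have hFmv := Fmeas_aux hv
    have hinner_meas : ∀ (D : Set (Euc d)), Measurable fun x => ∫⁻ z in D,
        ENNReal.ofReal ((v x - v z)^2) := by
      intro D
      exact Measurable.lintegral_prod_right'
        (f := fun q : Euc d × Euc d => ENNReal.ofReal ((v q.1 - v q.2)^2)) hFmv
    have hswap : (∫⁻ y in B1, ∫⁻ z in C1, ENNReal.ofReal ((v z - v y)^2))
        = ∫⁻ z in C1, ∫⁻ y in B1, ENNReal.ofReal ((v z - v y)^2) :=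
      lintegral_lintegral_swap ((hFmv.comp measurable_swap).aemeasurable)
    have hmain : (∫⁻ x in A1, ∫⁻ y in B1, ENNReal.ofReal ((v x - v y)^2)) * volume C1 ≤
        2 * volume B1 * (∫⁻ x in A1, ∫⁻ z in C1, ENNReal.ofReal ((v x - v z)^2))
          + 2 * volume A1 * (∫⁻ z in C1, ∫⁻ y in B1, ENNReal.ofReal ((v z - v y)^2)) := by
      calc (∫⁻ x in A1, ∫⁻ y in B1, ENNReal.ofReal ((v x - v y)^2)) * volume C1
          = ∫⁻ x in A1, (∫⁻ y in B1, ENNReal.ofReal ((v x - v y)^2)) * volume C1 :=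
            (lintegral_mul_const' _ _ hCT).symm
        _ = ∫⁻ x in A1, ∫⁻ y in B1, (ENNReal.ofReal ((v x - v y)^2) * volume C1) :=
            lintegral_congr fun x => (lintegral_mul_const' _ _ hCT).symm
        _ = ∫⁻ x in A1, ∫⁻ y in B1, ∫⁻ _ in C1, ENNReal.ofReal ((v x - v y)^2) :=
            lintegral_congr fun x => lintegral_congr fun y => (setLIntegral_const _ _).symm
        _ ≤ ∫⁻ x in A1, ∫⁻ y in B1, ∫⁻ z in C1,
              (2 * ENNReal.ofReal ((v x - v z)^2) + 2 * ENNReal.ofReal ((v z - v y)^2)) := by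
            refine lintegral_mono fun x => lintegral_mono fun y => lintegral_mono fun z => ?_
            exact F_triangle_aux v x y z
        _ = ∫⁻ x in A1, ∫⁻ y in B1, (2 * (∫⁻ z in C1, ENNReal.ofReal ((v x - v z)^2))
              + 2 * (∫⁻ z in C1, ENNReal.ofReal ((v z - v y)^2))) := by
            refine lintegral_congr fun x => lintegral_congr fun y => ?_
            have hm1 : Measurable fun z => ENNReal.ofReal ((v x - v z)^2) :=
              ENNReal.measurable_ofReal.comp ((measurable_const.sub hv).pow_const 2)
            have hm2 : Measurable fun z => ENNReal.ofReal ((v z - v y)^2) :=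
              ENNReal.measurable_ofReal.comp ((hv.sub measurable_const).pow_const 2)
            rw [lintegral_add_left (hm1.const_mul 2), lintegral_const_mul 2 hm1,
              lintegral_const_mul 2 hm2]
        _ = ∫⁻ x in A1, (2 * (∫⁻ z in C1, ENNReal.ofReal ((v x - v z)^2)) * volume B1
              + 2 * (∫⁻ y in B1, ∫⁻ z in C1, ENNReal.ofReal ((v z - v y)^2))) := by
            refine lintegral_congr fun x => ?_
            have hm3 : Measurable fun y => ∫⁻ z in C1, ENNReal.ofReal ((v z - v y)^2) := by
              exact Measurable.lintegral_prod_right'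
                (f := fun q : Euc d × Euc d => ENNReal.ofReal ((v q.2 - v q.1)^2))
                (hFmv.comp measurable_swap)
            rw [lintegral_add_left measurable_const, setLIntegral_const,
              lintegral_const_mul 2 hm3]
        _ = 2 * volume B1 * (∫⁻ x in A1, ∫⁻ z in C1, ENNReal.ofReal ((v x - v z)^2))
              + 2 * volume A1 * (∫⁻ z in C1, ∫⁻ y in B1, ENNReal.ofReal ((v z - v y)^2)) := by
            rw [lintegral_add_left (((hinner_meas C1).const_mul 2).mul_const _),
              setLIntegral_const, ← hswap]
            have : ∫⁻ x in A1, 2 * (∫⁻ z in C1, ENNReal.ofReal ((v x - v z)^2)) * volume B1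
                = 2 * volume B1 * ∫⁻ x in A1, ∫⁻ z in C1, ENNReal.ofReal ((v x - v z)^2) := by
              rw [show (fun x => 2 * (∫⁻ z in C1, ENNReal.ofReal ((v x - v z)^2)) * volume B1)
                  = fun x => (2 * volume B1) * (∫⁻ z in C1, ENNReal.ofReal ((v x - v z)^2))
                  from funext fun x => by ring,
                lintegral_const_mul _ (hinner_meas C1)]
            rw [this]
            ring
    calc (∫⁻ x in A1, ∫⁻ y in B1, ENNReal.ofReal ((v x - v y)^2))
        = (volume C1)⁻¹ * ((∫⁻ x in A1, ∫⁻ y in B1, ENNReal.ofReal ((v x - v y)^2)) * volume C1)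
          := by
          rw [mul_comm _ (volume C1), ← mul_assoc, ENNReal.inv_mul_cancel hC0 hCT, one_mul]
      _ ≤ _ := mul_le_mul_right hmain _
  -- ### Finite cover of Ω by small balls
  have hcover : closure Ω ⊆ ⋃ x ∈ Ω, Metric.ball x (ε/4) := by
    intro z hz
    obtain ⟨x, hxΩ, hxd⟩ := Metric.mem_closure_iff.mp hz (ε/4) (by positivity)
    exact Set.mem_biUnion hxΩ (by simpa [Metric.mem_ball] using hxd)
  obtain ⟨t, htΩ, htfin, htcover⟩ := hΩb.isCompact_closure.elim_finite_subcover_image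
    (fun x _ => Metric.isOpen_ball) hcover
  set A : Euc d → Set (Euc d) := fun p => Ω ∩ Metric.ball p (ε/4) with hA_def
  have hAsub : ∀ p, A p ⊆ Ω := fun p => Set.inter_subset_left
  have hAopen : ∀ p, IsOpen (A p) := fun p => hΩo.inter Metric.isOpen_ball
  have hAfin : ∀ p, volume (A p) ≠ ∞ :=
    fun p => ((measure_mono (hAsub p)).trans_lt (lt_top_iff_ne_top.mpr hμΩ_fin)).ne
  have hApos : ∀ p ∈ Ω, volume (A p) ≠ 0 := by
    intro p hp
    exact ((hAopen p).measure_pos volume ⟨p, hp, Metric.mem_ball_self (by positivity)⟩).ne'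
  have hself : ∀ p ∈ Ω, p ∈ A p := fun p hp => ⟨hp, Metric.mem_ball_self (by positivity)⟩
  have hAdist : ∀ p q : Euc d, (A p ∩ A q).Nonempty →
      ∀ x ∈ A p, ∀ y ∈ A q, dist x y < ε := by
    rintro p q ⟨w, ⟨-, hwp⟩, ⟨-, hwq⟩⟩ x hx y hy
    have h1 : dist x p < ε/4 := hx.2
    have h2 : dist w p < ε/4 := hwp
    have h3 : dist w q < ε/4 := hwq
    have h4 : dist y q < ε/4 := hy.2
    have h5 : dist x q ≤ dist x p + dist p w + dist w q := dist_triangle4 x p w q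
    have h6 : dist x y ≤ dist x q + dist q y := dist_triangle x q y
    rw [dist_comm p w] at h5
    rw [dist_comm q y] at h6
    linarith
  -- the chain relation
  set r : Euc d → Euc d → Prop :=
    fun p q => p ∈ t ∧ q ∈ t ∧ (A p ∩ A q).Nonempty with hr_def
  -- connectivity of the cover graph
  have hreach : ∀ p ∈ t, ∀ q ∈ t, Relation.ReflTransGen r p q := by
    intro p hp q hq
    by_contra hnot
    set U : Set (Euc d) := ⋃ (a : Euc d) (_ : a ∈ t ∧ Relation.ReflTransGen r p a), A a with hU
    set V : Set (Euc d) := ⋃ (a : Euc d) (_ : a ∈ t ∧ ¬ Relation.ReflTransGen r p a), A a with hV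
    have hUo : IsOpen U := isOpen_iUnion fun a => isOpen_iUnion fun _ => hAopen a
    have hVo : IsOpen V := isOpen_iUnion fun a => isOpen_iUnion fun _ => hAopen a
    have hΩsub : Ω ⊆ U ∪ V := by
      intro z hz
      obtain ⟨a, ha, hza⟩ := Set.mem_iUnion₂.mp (htcover (subset_closure hz))
      by_cases hra : Relation.ReflTransGen r p a
      · exact Or.inl (Set.mem_iUnion₂.mpr ⟨a, ⟨ha, hra⟩, hz, hza⟩)
      · exact Or.inr (Set.mem_iUnion₂.mpr ⟨a, ⟨ha, hra⟩, hz, hza⟩)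
    have hUne : (Ω ∩ U).Nonempty :=
      ⟨p, htΩ hp, Set.mem_iUnion₂.mpr ⟨p, ⟨hp, Relation.ReflTransGen.refl⟩, hself p (htΩ hp)⟩⟩
    have hVne : (Ω ∩ V).Nonempty :=
      ⟨q, htΩ hq, Set.mem_iUnion₂.mpr ⟨q, ⟨hq, hnot⟩, hself q (htΩ hq)⟩⟩
    obtain ⟨z, hzΩ, hzU, hzV⟩ := hΩpc U V hUo hVo hΩsub hUne hVne
    obtain ⟨a, ⟨haT, hra⟩, hza⟩ := Set.mem_iUnion₂.mp hzU
    obtain ⟨b, ⟨hbT, hrb⟩, hzb⟩ := Set.mem_iUnion₂.mp hzV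
    exact hrb (hra.tail ⟨haT, hbT, ⟨z, hza, hzb⟩⟩)
  -- key chaining bound
  have key : ∀ p q : Euc d, Relation.ReflTransGen r p q → p ∈ t →
      ∃ B : ℝ≥0∞, B ≠ ∞ ∧ ∀ v : Euc d → ℝ, Measurable v →
        (∫⁻ x in A p, ∫⁻ y in A q, ENNReal.ofReal ((v x - v y)^2)) ≤ B * energy Ω γ v := by
    intro p q hpq hp
    induction hpq with
    | refl =>
        refine ⟨K₀, hK₀T, fun v hv => ?_⟩
        refine strip (A p) (A p) (hAsub p) (hAsub p) ?_ v hv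
        exact hAdist p p ⟨p, hself p (htΩ hp), hself p (htΩ hp)⟩
    | @tail b q' hpb hbq ih =>
        obtain ⟨B, hBT, hB⟩ := ih
        obtain ⟨hbT, hq'T, hABne⟩ := hbq
        have hb0 : volume (A b) ≠ 0 := hApos b (htΩ hbT)
        refine ⟨(volume (A b))⁻¹ * (2 * volume Ω * B + 2 * volume Ω * K₀),
          ENNReal.mul_ne_top (ENNReal.inv_ne_top.mpr hb0)
            (by
              refine ENNReal.add_ne_top.mpr ⟨?_, ?_⟩
              · exact ENNReal.mul_ne_top (ENNReal.mul_ne_top (by norm_num) hμΩ_fin) hBT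
              · exact ENNReal.mul_ne_top (ENNReal.mul_ne_top (by norm_num) hμΩ_fin) hK₀T),
          fun v hv => ?_⟩
        have hstrip : (∫⁻ x in A b, ∫⁻ y in A q', ENNReal.ofReal ((v x - v y)^2))
            ≤ K₀ * energy Ω γ v :=
          strip (A b) (A q') (hAsub b) (hAsub q') (hAdist b q' hABne) v hv
        calc (∫⁻ x in A p, ∫⁻ y in A q', ENNReal.ofReal ((v x - v y)^2))
            ≤ (volume (A b))⁻¹ * (2 * volume (A q')
                * (∫⁻ x in A p, ∫⁻ z in A b, ENNReal.ofReal ((v x - v z)^2))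
              + 2 * volume (A p)
                * (∫⁻ z in A b, ∫⁻ y in A q', ENNReal.ofReal ((v z - v y)^2))) :=
              jensen (A p) (A q') (A b) hb0 (hAfin b) v hv
          _ ≤ (volume (A b))⁻¹ * (2 * volume Ω * (B * energy Ω γ v)
              + 2 * volume Ω * (K₀ * energy Ω γ v)) := by
              refine mul_le_mul_right (add_le_add ?_ ?_) _
              · exact mul_le_mul' (mul_le_mul_right (measure_mono (hAsub q')) 2) (hB v hv)
              · exact mul_le_mul' (mul_le_mul_right (measure_mono (hAsub p)) 2) hstrip
          _ = (volume (A b))⁻¹ * (2 * volume Ω * B + 2 * volume Ω * K₀) * energy Ω γ v := by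
              ring
  -- choose per-pair constants
  have key2 : ∀ p q : Euc d, ∃ B : ℝ≥0∞, B ≠ ∞ ∧ (p ∈ t → q ∈ t →
      ∀ v : Euc d → ℝ, Measurable v →
        (∫⁻ x in A p, ∫⁻ y in A q, ENNReal.ofReal ((v x - v y)^2)) ≤ B * energy Ω γ v) := by
    intro p q
    by_cases hpq : p ∈ t ∧ q ∈ t
    · obtain ⟨B, hBT, hB⟩ := key p q (hreach p hpq.1 q hpq.2) hpq.1
      exact ⟨B, hBT, fun _ _ => hB⟩
    · exact ⟨0, by norm_num, fun hp hq => absurd ⟨hp, hq⟩ hpq⟩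
  choose Bc hBcT hBc using key2
  set T : Finset (Euc d) := htfin.toFinset with hT_def
  have hTt : ∀ p, p ∈ T ↔ p ∈ t := fun p => Set.Finite.mem_toFinset htfin
  set 𝒞 : ℝ≥0∞ := ∑ p ∈ T, ∑ q ∈ T, Bc p q with h𝒞_def
  have h𝒞T : 𝒞 ≠ ∞ := by
    rw [h𝒞_def]
    refine (ENNReal.sum_lt_top.mpr fun p _ => ?_).ne
    exact ENNReal.sum_lt_top.mpr fun q _ => lt_top_iff_ne_top.mpr (hBcT p q)
  -- final constant
  refine ⟨𝒞.toReal + 1, by positivity, fun v hv => ?_⟩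
  obtain ⟨hvm, -⟩ := hv
  have hFmv := Fmeas_aux hvm
  have hcovΩ : Ω ⊆ ⋃ p ∈ T, A p := by
    intro z hz
    obtain ⟨a, ha, hza⟩ := Set.mem_iUnion₂.mp (htcover (subset_closure hz))
    exact Set.mem_iUnion₂.mpr ⟨a, (hTt a).mpr ha, hz, hza⟩
  have hAm : ∀ p, MeasurableSet (A p) := fun p => (hAopen p).measurableSet
  have hres := restrict_le_sum_aux (Ω := Ω) (T := T) (A := A) hAm hcovΩ
  have hinner_meas : ∀ (D : Set (Euc d)), Measurable fun x => ∫⁻ y in D,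
      ENNReal.ofReal ((v x - v y)^2) := by
    intro D
    exact Measurable.lintegral_prod_right'
      (f := fun q : Euc d × Euc d => ENNReal.ofReal ((v q.1 - v q.2)^2)) hFmv
  have hsplit : (∫⁻ x in Ω, ∫⁻ y in Ω, ENNReal.ofReal ((v x - v y)^2))
      ≤ ∑ p ∈ T, ∑ q ∈ T, ∫⁻ x in A p, ∫⁻ y in A q, ENNReal.ofReal ((v x - v y)^2) := by
    calc (∫⁻ x in Ω, ∫⁻ y in Ω, ENNReal.ofReal ((v x - v y)^2))
        ≤ ∫⁻ x in Ω, ∑ q ∈ T, ∫⁻ y in A q, ENNReal.ofReal ((v x - v y)^2) := by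
          refine lintegral_mono fun x => ?_
          calc (∫⁻ y in Ω, ENNReal.ofReal ((v x - v y)^2))
              ≤ ∫⁻ y, ENNReal.ofReal ((v x - v y)^2)
                  ∂(∑ q ∈ T, volume.restrict (A q)) := lintegral_mono' hres le_rfl
            _ = ∑ q ∈ T, ∫⁻ y in A q, ENNReal.ofReal ((v x - v y)^2) :=
                lintegral_finset_sum_measure T _ _
      _ = ∑ q ∈ T, ∫⁻ x in Ω, ∫⁻ y in A q, ENNReal.ofReal ((v x - v y)^2) :=
          lintegral_finset_sum T fun q _ => hinner_meas (A q)
      _ ≤ ∑ q ∈ T, ∑ p ∈ T, ∫⁻ x in A p, ∫⁻ y in A q, ENNReal.ofReal ((v x - v y)^2) := by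
          refine Finset.sum_le_sum fun q _ => ?_
          calc (∫⁻ x in Ω, ∫⁻ y in A q, ENNReal.ofReal ((v x - v y)^2))
              ≤ ∫⁻ x, (∫⁻ y in A q, ENNReal.ofReal ((v x - v y)^2))
                  ∂(∑ p ∈ T, volume.restrict (A p)) := lintegral_mono' hres le_rfl
            _ = ∑ p ∈ T, ∫⁻ x in A p, ∫⁻ y in A q, ENNReal.ofReal ((v x - v y)^2) :=
                lintegral_finset_sum_measure T _ _
      _ = ∑ p ∈ T, ∑ q ∈ T, ∫⁻ x in A p, ∫⁻ y in A q, ENNReal.ofReal ((v x - v y)^2) :=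
          Finset.sum_comm
  have hbound : (∫⁻ x in Ω, ∫⁻ y in Ω, ENNReal.ofReal ((v x - v y)^2))
      ≤ 𝒞 * energy Ω γ v := by
    refine hsplit.trans ?_
    rw [h𝒞_def, Finset.sum_mul]
    refine Finset.sum_le_sum fun p hp => ?_
    rw [Finset.sum_mul]
    refine Finset.sum_le_sum fun q hq => ?_
    exact hBc p q ((hTt p).mp hp) ((hTt q).mp hq) v hvm
  have hfinal : 𝒞 ≤ ENNReal.ofReal (𝒞.toReal + 1) := by
    rw [ENNReal.ofReal_add ENNReal.toReal_nonneg (by norm_num), ENNReal.ofReal_toReal h𝒞T]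
    exact le_add_of_nonneg_right (by norm_num)
  have henergy : energy Ω γ v = ∫⁻ x in Ω, ∫⁻ y, ENNReal.ofReal ((v x - v y) ^ 2 * γ y x) := rfl
  calc (∫⁻ x in Ω, ∫⁻ y in Ω, ENNReal.ofReal ((v x - v y) ^ 2))
      ≤ 𝒞 * energy Ω γ v := hbound
    _ ≤ ENNReal.ofReal (𝒞.toReal + 1) * energy Ω γ v := mul_le_mul_left hfinal _
    _ = ENNReal.ofReal (𝒞.toReal + 1)
        * ∫⁻ x in Ω, ∫⁻ y, ENNReal.ofReal ((v x - v y) ^ 2 * γ y x) := by rw [henergy]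
end
end

section
/- Trace inequality: let c ≥ 0 satisfy ess inf_{x∈Ω}∫_Γ γ(y,x) dy + c > 0 and define w(y) = ∫_Ω γ(y,x)/(∫_Γ γ(z,x) dz + c) dx for y ∈ Γ. Then w < ∞ a.e. on Γ, and the trace map Tr : V(Ω;γ) → L²(Γ; w dy), v ↦ v|_Γ, is bounded; specifically ∫_Γ u²(y) w(y) dy ≤ 2 max{1/(ess inf_{x∈Ω}∫_Γ γ(y,x)dy + c), 1} ‖u‖²_{V(Ω;γ)}. -/
open MeasureTheory ENNReal Filter

noncomputable section

/-- The trace weight w(y) = ∫_Ω γ(y,x)/(∫_Γ γ(z,x) dz + c) dx. -/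
def traceW {d : ℕ} (Ω : Set (Euc d)) (γ : Euc d → Euc d → ℝ) (c : ℝ) (y : Euc d) : ℝ≥0∞ :=
  ∫⁻ x in Ω, ENNReal.ofReal (γ y x) /
    ((∫⁻ z in Gamma Ω γ, ENNReal.ofReal (γ z x)) + ENNReal.ofReal c)

/-- trace inequality: w is a.e. finite on Γ and
∫_Γ u² w dy ≤ 2 max{(ess inf ∫_Γ γ dy + c)⁻¹, 1} ‖u‖²_{V(Ω;γ)}. -/
theorem statement15 {d : ℕ} (Ω : Set (Euc d)) (hΩo : IsOpen Ω) (hΩne : Ω.Nonempty)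
    (hΩb : Bornology.IsBounded Ω)
    (γ : Euc d → Euc d → ℝ) (hγm : Measurable (Function.uncurry γ)) (hγ0 : ∀ x y, 0 ≤ γ x y)
    (hfin : ∀ᵐ x ∂(volume.restrict Ω), (∫⁻ z in Gamma Ω γ, ENNReal.ofReal (γ z x)) < ⊤)
    (c : ℝ) (hc : 0 ≤ c)
    (hpos : 0 < essInf (fun x => ∫⁻ y in Gamma Ω γ, ENNReal.ofReal (γ y x))
        (volume.restrict Ω) + ENNReal.ofReal c) :
    (∀ᵐ y ∂(volume.restrict (Gamma Ω γ)), traceW Ω γ c y < ⊤) ∧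
    (∀ u : Euc d → ℝ, memV Ω γ u →
      (∫⁻ y in Gamma Ω γ, ENNReal.ofReal ((u y) ^ 2) * traceW Ω γ c y) ≤
        2 * max ((essInf (fun x => ∫⁻ y in Gamma Ω γ, ENNReal.ofReal (γ y x))
            (volume.restrict Ω) + ENNReal.ofReal c)⁻¹) 1 * Vnorm Ω γ u) := by
  classical
  set E := essInf (fun x => ∫⁻ y in Gamma Ω γ, ENNReal.ofReal (γ y x)) (volume.restrict Ω) with hE
  set D : Euc d → ℝ≥0∞ := fun x =>
    (∫⁻ z in Gamma Ω γ, ENNReal.ofReal (γ z x)) + ENNReal.ofReal c with hDdef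
  set K := E + ENNReal.ofReal c with hKdef
  set M := max K⁻¹ 1 with hMdef
  have hγm' : Measurable fun p : Euc d × Euc d => ENNReal.ofReal (γ p.1 p.2) :=
    ENNReal.measurable_ofReal.comp hγm
  have hγy : ∀ x, Measurable fun y => ENNReal.ofReal (γ y x) := fun x =>
    ENNReal.measurable_ofReal.comp (hγm.comp (measurable_id.prodMk measurable_const))
  have hIm : Measurable fun x => ∫⁻ z in Gamma Ω γ, ENNReal.ofReal (γ z x) :=
    Measurable.lintegral_prod_left hγm'
  have hDm : Measurable D := hIm.add measurable_const
  have htrW : ∀ y, traceW Ω γ c y = ∫⁻ x in Ω, ENNReal.ofReal (γ y x) / D x := fun y => rfl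
  have hKD : ∀ᵐ x ∂(volume.restrict Ω), K ≤ D x := by
    filter_upwards [ae_essInf_le
      (f := fun x => ∫⁻ y in Gamma Ω γ, ENNReal.ofReal (γ y x))
      (μ := volume.restrict Ω)] with x hx
    exact add_le_add_left hx _
  have hID : ∀ x, (∫⁻ z in Gamma Ω γ, ENNReal.ofReal (γ z x)) / D x ≤ 1 := by
    intro x
    refine ENNReal.div_le_of_le_mul ?_
    rw [one_mul]
    exact le_self_add
  have hKne : K⁻¹ ≠ ⊤ := by
    simp [ENNReal.inv_ne_top]
    exact hpos.ne'
  have hMne : M ≠ ⊤ := by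
    simp [hMdef, hKne]
  -- Part 1
  have hswap1 : (∫⁻ y in Gamma Ω γ, traceW Ω γ c y) =
      ∫⁻ x in Ω, (∫⁻ y in Gamma Ω γ, ENNReal.ofReal (γ y x)) / D x := by
    calc (∫⁻ y in Gamma Ω γ, traceW Ω γ c y)
        = ∫⁻ y in Gamma Ω γ, ∫⁻ x in Ω, ENNReal.ofReal (γ y x) / D x := by
          exact lintegral_congr htrW
      _ = ∫⁻ x in Ω, ∫⁻ y in Gamma Ω γ, ENNReal.ofReal (γ y x) / D x := by
          refine lintegral_lintegral_swap ?_
          exact (hγm'.div (hDm.comp measurable_snd)).aemeasurable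
      _ = ∫⁻ x in Ω, (∫⁻ y in Gamma Ω γ, ENNReal.ofReal (γ y x)) / D x := by
          refine lintegral_congr fun x => ?_
          simp_rw [div_eq_mul_inv]
          exact lintegral_mul_const _ (hγy x)
  have h1 : (∫⁻ y in Gamma Ω γ, traceW Ω γ c y) ≠ ⊤ := by
    rw [hswap1]
    refine ne_top_of_le_ne_top ?_ (lintegral_mono fun x => hID x)
    simpa using hΩb.measure_lt_top.ne
  have hwm : Measurable (traceW Ω γ c) := by
    have : Measurable fun y => ∫⁻ x,
        (fun p : Euc d × Euc d => ENNReal.ofReal (γ p.1 p.2) / D p.2) (y, x)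
          ∂(volume.restrict Ω) :=
      Measurable.lintegral_prod_right' (hγm'.div (hDm.comp measurable_snd))
    exact this
  refine ⟨ae_lt_top hwm h1, ?_⟩
  -- Part 2
  rintro u ⟨hum, -⟩
  have huy : Measurable fun y => ENNReal.ofReal (u y ^ 2) :=
    ENNReal.measurable_ofReal.comp (hum.pow_const 2)
  have hswap2 : (∫⁻ y in Gamma Ω γ, ENNReal.ofReal (u y ^ 2) * traceW Ω γ c y) =
      ∫⁻ x in Ω, ∫⁻ y in Gamma Ω γ,
        ENNReal.ofReal (u y ^ 2) * (ENNReal.ofReal (γ y x) / D x) := by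
    calc (∫⁻ y in Gamma Ω γ, ENNReal.ofReal (u y ^ 2) * traceW Ω γ c y)
        = ∫⁻ y in Gamma Ω γ, ∫⁻ x in Ω,
            ENNReal.ofReal (u y ^ 2) * (ENNReal.ofReal (γ y x) / D x) := by
          refine lintegral_congr fun y => ?_
          rw [htrW y]
          exact (lintegral_const_mul' _ _ ENNReal.ofReal_ne_top).symm
      _ = _ := by
          refine lintegral_lintegral_swap ?_
          exact ((ENNReal.measurable_ofReal.comp
            ((hum.comp measurable_fst).pow_const 2)).mul
            (hγm'.div (hDm.comp measurable_snd))).aemeasurable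
  rw [hswap2]
  have hkey : ∀ᵐ x ∂(volume.restrict Ω),
      (∫⁻ y in Gamma Ω γ, ENNReal.ofReal (u y ^ 2) * (ENNReal.ofReal (γ y x) / D x)) ≤
        2 * M * (ENNReal.ofReal (u x ^ 2) +
          ∫⁻ y, ENNReal.ofReal ((u x - u y) ^ 2 * γ y x)) := by
    filter_upwards [hKD] with x hKx
    have hsqm : Measurable fun y => ENNReal.ofReal ((u x - u y) ^ 2) :=
      ENNReal.measurable_ofReal.comp ((measurable_const.sub hum).pow_const 2)
    set A : ℝ≥0∞ := ∫⁻ y in Gamma Ω γ,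
      ENNReal.ofReal ((u x - u y) ^ 2) * ENNReal.ofReal (γ y x) with hA
    set I : ℝ≥0∞ := ∫⁻ z in Gamma Ω γ, ENNReal.ofReal (γ z x) with hI
    have step1 : (∫⁻ y in Gamma Ω γ,
        ENNReal.ofReal (u y ^ 2) * (ENNReal.ofReal (γ y x) / D x)) =
        (∫⁻ y in Gamma Ω γ, ENNReal.ofReal (u y ^ 2) * ENNReal.ofReal (γ y x)) * (D x)⁻¹ := by
      simp_rw [div_eq_mul_inv, ← mul_assoc]
      exact lintegral_mul_const _ (huy.mul (hγy x))
    have step2 : (∫⁻ y in Gamma Ω γ, ENNReal.ofReal (u y ^ 2) * ENNReal.ofReal (γ y x)) ≤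
        2 * A + 2 * ENNReal.ofReal (u x ^ 2) * I := by
      have hpt : ∀ y, ENNReal.ofReal (u y ^ 2) * ENNReal.ofReal (γ y x) ≤
          2 * (ENNReal.ofReal ((u x - u y) ^ 2) * ENNReal.ofReal (γ y x)) +
            (2 * ENNReal.ofReal (u x ^ 2)) * ENNReal.ofReal (γ y x) := by
        intro y
        have hr : u y ^ 2 ≤ 2 * (u x - u y) ^ 2 + 2 * u x ^ 2 := by
          nlinarith [sq_nonneg (2 * u x - u y)]
        calc ENNReal.ofReal (u y ^ 2) * ENNReal.ofReal (γ y x)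
            ≤ ENNReal.ofReal (2 * (u x - u y) ^ 2 + 2 * u x ^ 2) *
                ENNReal.ofReal (γ y x) :=
              mul_le_mul_left (ENNReal.ofReal_le_ofReal hr) _
          _ = _ := by
              rw [ENNReal.ofReal_add (by positivity) (by positivity),
                ENNReal.ofReal_mul (by norm_num), ENNReal.ofReal_mul (by norm_num),
                ENNReal.ofReal_ofNat, add_mul, mul_assoc]
      calc (∫⁻ y in Gamma Ω γ, ENNReal.ofReal (u y ^ 2) * ENNReal.ofReal (γ y x))
          ≤ ∫⁻ y in Gamma Ω γ,
              (2 * (ENNReal.ofReal ((u x - u y) ^ 2) * ENNReal.ofReal (γ y x)) +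
                (2 * ENNReal.ofReal (u x ^ 2)) * ENNReal.ofReal (γ y x)) :=
            lintegral_mono fun y => hpt y
        _ = 2 * A + 2 * ENNReal.ofReal (u x ^ 2) * I := by
            rw [lintegral_add_left (f := fun y =>
                2 * (ENNReal.ofReal ((u x - u y) ^ 2) * ENNReal.ofReal (γ y x)))
                (measurable_const.mul (hsqm.mul (hγy x))),
              lintegral_const_mul' _ _ (by norm_num : (2 : ℝ≥0∞) ≠ ⊤),
              lintegral_const_mul' _ _
                (ENNReal.mul_ne_top (by norm_num) ENNReal.ofReal_ne_top)]
    have hAle : A ≤ ∫⁻ y, ENNReal.ofReal ((u x - u y) ^ 2 * γ y x) := by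
      calc A = ∫⁻ y in Gamma Ω γ, ENNReal.ofReal ((u x - u y) ^ 2 * γ y x) := by
            refine lintegral_congr fun y => ?_
            rw [ENNReal.ofReal_mul (sq_nonneg _)]
        _ ≤ _ := setLIntegral_le_lintegral _ _
    have h1le : (1 : ℝ≥0∞) ≤ M := le_max_right _ _
    calc (∫⁻ y in Gamma Ω γ, ENNReal.ofReal (u y ^ 2) * (ENNReal.ofReal (γ y x) / D x))
        = (∫⁻ y in Gamma Ω γ, ENNReal.ofReal (u y ^ 2) * ENNReal.ofReal (γ y x)) *
            (D x)⁻¹ := step1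
      _ ≤ (2 * A + 2 * ENNReal.ofReal (u x ^ 2) * I) * (D x)⁻¹ :=
          mul_le_mul_left step2 _
      _ = 2 * A * (D x)⁻¹ + 2 * ENNReal.ofReal (u x ^ 2) * (I / D x) := by
          rw [add_mul, mul_assoc (2 * ENNReal.ofReal (u x ^ 2)), div_eq_mul_inv]
      _ ≤ 2 * A * K⁻¹ + 2 * ENNReal.ofReal (u x ^ 2) * 1 := by
          exact add_le_add (mul_le_mul_right (ENNReal.inv_le_inv' hKx) _)
            (mul_le_mul_right (hID x) _)
      _ ≤ 2 * M * (∫⁻ y, ENNReal.ofReal ((u x - u y) ^ 2 * γ y x)) +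
            2 * M * ENNReal.ofReal (u x ^ 2) := by
          refine add_le_add ?_ ?_
          · calc 2 * A * K⁻¹ = 2 * K⁻¹ * A := by ring
              _ ≤ 2 * M * A := by gcongr; exact le_max_left _ _
              _ ≤ _ := by gcongr
          · rw [mul_one]
            calc 2 * ENNReal.ofReal (u x ^ 2) = 2 * 1 * ENNReal.ofReal (u x ^ 2) := by
                  rw [mul_one]
              _ ≤ 2 * M * ENNReal.ofReal (u x ^ 2) := by gcongr
      _ = 2 * M * (ENNReal.ofReal (u x ^ 2) +
            ∫⁻ y, ENNReal.ofReal ((u x - u y) ^ 2 * γ y x)) := by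
          rw [mul_add, add_comm]
  calc (∫⁻ x in Ω, ∫⁻ y in Gamma Ω γ,
        ENNReal.ofReal (u y ^ 2) * (ENNReal.ofReal (γ y x) / D x))
      ≤ ∫⁻ x in Ω, 2 * M * (ENNReal.ofReal (u x ^ 2) +
          ∫⁻ y, ENNReal.ofReal ((u x - u y) ^ 2 * γ y x)) := lintegral_mono_ae hkey
    _ = 2 * M * ((∫⁻ x in Ω, ENNReal.ofReal (u x ^ 2)) +
          ∫⁻ x in Ω, ∫⁻ y, ENNReal.ofReal ((u x - u y) ^ 2 * γ y x)) := by
        rw [lintegral_const_mul' _ _ (ENNReal.mul_ne_top (by norm_num) hMne),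
          lintegral_add_left huy]
    _ = 2 * M * Vnorm Ω γ u := rfl
end
end
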